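/- Let A and B be finite-dimensional k-algebras, and let 𝒳 ⊆ mod A and 𝒴 ⊆ mod B be additively closed full subcategories containing all projective modules. Suppose there are k-linear functors F : mod A → mod B and G : mod B → mod A such that F is exact, there is a natural isomorphism Φ : id_{mod B} ≅ F∘G, F maps 𝒳 into 𝒴, and G maps 𝒴 into 𝒳. If n is a natural number such that every A-module admits an 𝒳-resolution of length at most n, then every B-module admits a 𝒴-resolution of length at most n. -/

import Mathlib

/-! Applying the exact functor `F` to an `𝒳`-resolution of `G N` gives a `𝒴`-resolution of the
same length of `F (G N) ≅ N`. -/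

open CategoryTheory CategoryTheory.Limits

attribute [local instance] CategoryTheory.Limits.HasFiniteBiproducts.of_hasFiniteProducts

section Posets

variable {P : Type} [PartialOrder P]

/-- Zigzag connectivity of two elements of a subset `S` of a poset: they are linked by a
zigzag of comparable pairs inside `S`. -/
def ZigzagConnIn (S : Set P) (a b : S) : Prop :=
  Relation.ReflTransGen (fun u v : S => (u : P) ≤ v ∨ (v : P) ≤ u) a b

/-- A subset of a poset is convex if `x ≤ z ≤ y` with `x, y` in the subset implies `z` is. -/
def IsConvex (S : Set P) : Prop :=
  ∀ ⦃x y z : P⦄, x ∈ S → y ∈ S → x ≤ z → z ≤ y → z ∈ S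

/-- An interval of a poset: a nonempty, convex, zigzag-connected subset. -/
def IsIntervalSet (S : Set P) : Prop :=
  S.Nonempty ∧ IsConvex S ∧ ∀ a b : S, ZigzagConnIn S a b

end Posets

section IntervalModules

variable (k : Type) [Field k] {P : Type} [PartialOrder P]

open Classical in
/-- The linear map between the fibers of the interval module. -/
noncomputable def intervalModuleAux (S : Set P) (p q : P) :
    ↥(if p ∈ S then (⊤ : Submodule k k) else ⊥) →ₗ[k]
      ↥(if q ∈ S then (⊤ : Submodule k k) else ⊥) where
  toFun x := ⟨(if p ∈ S ∧ q ∈ S then (1 : k) else 0) * x.1, by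
    by_cases hq : q ∈ S
    · rw [if_pos hq]; exact Submodule.mem_top
    · rw [if_neg hq, if_neg (fun h => hq h.2), zero_mul]; exact Submodule.zero_mem _⟩
  map_add' x y := by ext; simp [mul_add]
  map_smul' c x := by ext; simp

open Classical in
/-- The interval module `k_S` associated to a convex subset `S` of a poset `P`:
it is `k` at points of `S`, `0` elsewhere, with identity structure maps inside `S`. -/
noncomputable def intervalModule (S : Set P) (hS : IsConvex S) : P ⥤ ModuleCat.{0} k where
  obj p := ModuleCat.of k ↥(if p ∈ S then (⊤ : Submodule k k) else ⊥)
  map {p q} _ := ModuleCat.ofHom (intervalModuleAux k S p q)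
  map_id p := by
    apply ModuleCat.hom_ext
    apply LinearMap.ext
    rintro ⟨x, hx⟩
    apply Subtype.ext
    show (if p ∈ S ∧ p ∈ S then (1 : k) else 0) * x = x
    by_cases hp : p ∈ S
    · simp [hp]
    · rw [if_neg hp] at hx
      simp [hp, (Submodule.mem_bot k).mp hx]
  map_comp {p q r} f g := by
    apply ModuleCat.hom_ext
    apply LinearMap.ext
    rintro ⟨x, hx⟩
    apply Subtype.ext
    show (if p ∈ S ∧ r ∈ S then (1 : k) else 0) * x
      = (if q ∈ S ∧ r ∈ S then (1 : k) else 0) * ((if p ∈ S ∧ q ∈ S then (1 : k) else 0) * x)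
    by_cases hp : p ∈ S
    · by_cases hr : r ∈ S
      · have hq : q ∈ S := hS hp hr (leOfHom f) (leOfHom g)
        simp [hp, hq, hr]
      · simp [hr]
    · rw [if_neg hp] at hx
      simp [(Submodule.mem_bot k).mp hx]

/-- A persistence module is an interval module if it is isomorphic to `k_S` for some
interval `S`. -/
def IsIntervalModule (M : P ⥤ ModuleCat.{0} k) : Prop :=
  ∃ (S : Set P) (hS : IsIntervalSet S), Nonempty (M ≅ intervalModule k S hS.2.1)

/-- A persistence module is interval-decomposable if it is isomorphic to a finite direct sum
of interval modules. -/
def IsIntervalDecomposable (M : P ⥤ ModuleCat.{0} k) : Prop :=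
  ∃ (n : ℕ) (J : Fin n → (P ⥤ ModuleCat.{0} k)),
    (∀ i, IsIntervalModule k (J i)) ∧ Nonempty (M ≅ ⨁ J)

/-- The support of a persistence module. -/
def moduleSupport (M : P ⥤ ModuleCat.{0} k) : Set P := {p : P | ¬ IsZero (M.obj p)}

/-- A persistence module valued in finite-dimensional vector spaces. -/
def PointwiseFinite (M : P ⥤ ModuleCat.{0} k) : Prop :=
  ∀ p : P, FiniteDimensional k (M.obj p)

end IntervalModules

section Approximations

variable {C : Type*} [Category C]

/-- `f : X ⟶ M` is a right `𝒳`-approximation of `M` if `X ∈ 𝒳` and every morphism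
from an object of `𝒳` to `M` factors through `f`. -/
def IsRightApproximation (𝒳 : C → Prop) {X M : C} (f : X ⟶ M) : Prop :=
  𝒳 X ∧ ∀ ⦃Y : C⦄ (g : Y ⟶ M), 𝒳 Y → ∃ h : Y ⟶ X, h ≫ f = g

/-- `f : X ⟶ M` is right minimal if every endomorphism `g` of `X` with `f ∘ g = f`
is an isomorphism. -/
def IsRightMinimal {X M : C} (f : X ⟶ M) : Prop :=
  ∀ g : X ⟶ X, g ≫ f = f → IsIso g

end Approximations

/-- An interval cover: a right minimal approximation by interval-decomposable modules. -/
def IsIntervalCover (k : Type) [Field k] {P : Type} [PartialOrder P]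
    {X M : P ⥤ ModuleCat.{0} k} (f : X ⟶ M) : Prop :=
  IsRightApproximation (IsIntervalDecomposable k) f ∧ IsRightMinimal f

section Resolutions

variable {C : Type*} [Category C] [Limits.HasZeroMorphisms C]

/-- `M` admits a resolution `0 ⟶ J_n ⟶ ⋯ ⟶ J_1 ⟶ J_0 ⟶ M ⟶ 0` of length `n` by objects
of `𝒳`: an exact sequence in which every `J_i` lies in `𝒳`.  (The data is encoded by an
`ℕ`-indexed complex which vanishes in degrees `> n` and is exact everywhere.) -/
def HasResolutionOfLength (𝒳 : C → Prop) (n : ℕ) (M : C) : Prop :=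
  ∃ (J : ℕ → C) (d : ∀ i, J (i + 1) ⟶ J i) (f : J 0 ⟶ M) (w0 : d 0 ≫ f = 0)
    (w : ∀ i, d (i + 1) ≫ d i = 0),
    (∀ i, i ≤ n → 𝒳 (J i)) ∧ (∀ i, n < i → IsZero (J i)) ∧
    Epi f ∧ (ShortComplex.mk (d 0) f w0).Exact ∧
    ∀ i, (ShortComplex.mk (d (i + 1)) (d i) (w i)).Exact

end Resolutions

section ModA

/-- `k`-linear structure on the category of finite-dimensional modules over a
`k`-algebra `A`. -/
noncomputable instance fgModuleCatLinear (k A : Type) [Field k] [Ring A] [Algebra k A] :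
    Linear k (FGModuleCat A) := by
  dsimp [FGModuleCat]
  infer_instance

variable {C : Type*} [Category C] [Preadditive C]

/-- `Z`, together with the given injections and projections, is a biproduct (direct sum)
of `X` and `Y`. -/
def IsBiproductOf (Z X Y : C) (ι₁ : X ⟶ Z) (ι₂ : Y ⟶ Z) (π₁ : Z ⟶ X) (π₂ : Z ⟶ Y) : Prop :=
  ι₁ ≫ π₁ = 𝟙 X ∧ ι₂ ≫ π₂ = 𝟙 Y ∧ ι₁ ≫ π₂ = 0 ∧ ι₂ ≫ π₁ = 0 ∧ π₁ ≫ ι₁ + π₂ ≫ ι₂ = 𝟙 Z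

/-- An object is indecomposable if it is nonzero and, whenever it is a direct sum of two
objects, one of them is zero. -/
def IndecObj (X : C) : Prop :=
  ¬ Limits.IsZero X ∧ ∀ (Y Z : C) (ι₁ : Y ⟶ X) (ι₂ : Z ⟶ X) (π₁ : X ⟶ Y) (π₂ : X ⟶ Z),
    IsBiproductOf X Y Z ι₁ ι₂ π₁ π₂ → Limits.IsZero Y ∨ Limits.IsZero Z

/-- A predicate (class of objects) `𝒳` is additively closed: closed under isomorphisms,
finite direct sums and direct summands. -/
def AdditivelyClosed (𝒳 : C → Prop) : Prop :=
  (∀ ⦃X Y : C⦄, (X ≅ Y) → 𝒳 X → 𝒳 Y) ∧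
  (∀ (Z X Y : C) (ι₁ : X ⟶ Z) (ι₂ : Y ⟶ Z) (π₁ : Z ⟶ X) (π₂ : Z ⟶ Y),
    IsBiproductOf Z X Y ι₁ ι₂ π₁ π₂ → 𝒳 X → 𝒳 Y → 𝒳 Z) ∧
  (∀ (Z X Y : C) (ι₁ : X ⟶ Z) (ι₂ : Y ⟶ Z) (π₁ : Z ⟶ X) (π₂ : Z ⟶ Y),
    IsBiproductOf Z X Y ι₁ ι₂ π₁ π₂ → 𝒳 Z → 𝒳 X)

/-- `𝒳` is closed under quotients of indecomposable objects: for a short exact sequence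
`0 → Z → X → Y → 0` with `X` indecomposable, `X ∈ 𝒳` implies `Y ∈ 𝒳`. -/
def ClosedUnderQuotientsOfIndec (𝒳 : C → Prop) : Prop :=
  ∀ S : ShortComplex C, S.ShortExact → IndecObj S.X₂ → 𝒳 S.X₂ → 𝒳 S.X₃

end ModA

namespace HasResolutionOfLength

variable {C D : Type*} [Category C] [Category D] [HasZeroMorphisms C] [HasZeroMorphisms D]

theorem of_iso {𝒳 : C → Prop} {n : ℕ} {M N : C} (e : M ≅ N)
    (h : HasResolutionOfLength 𝒳 n M) : HasResolutionOfLength 𝒳 n N := by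
  obtain ⟨J, d, f, w0, w, hJ, hz, hepi, hex0, hex⟩ := h
  refine ⟨J, d, f ≫ e.hom, by rw [← Category.assoc, w0, zero_comp], w, hJ, hz, epi_comp _ _,
    ShortComplex.exact_of_iso ?_ hex0, hex⟩
  exact ShortComplex.isoMk (Iso.refl _) (Iso.refl _) e (by simp) (by simp)

theorem map (F : C ⥤ D) [F.PreservesZeroMorphisms] [F.PreservesEpimorphisms]
    (hF : ∀ S : ShortComplex C, S.Exact → (S.map F).Exact)
    {𝒳 : C → Prop} {𝒴 : D → Prop} (hFX : ∀ X, 𝒳 X → 𝒴 (F.obj X)) {n : ℕ} {M : C}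
    (h : HasResolutionOfLength 𝒳 n M) : HasResolutionOfLength 𝒴 n (F.obj M) := by
  obtain ⟨J, d, f, w0, w, hJ, hz, hepi, hex0, hex⟩ := h
  exact ⟨fun i => F.obj (J i), fun i => F.map (d i), F.map f,
    by rw [← F.map_comp, w0, F.map_zero], fun i => by rw [← F.map_comp, w i, F.map_zero],
    fun i hi => hFX _ (hJ i hi), fun i hi => F.map_isZero (hz i hi), inferInstance,
    hF _ hex0, fun i => hF _ (hex i)⟩

end HasResolutionOfLength

theorem resolution_global_dimension_transfer_general
    (k : Type) [Field k] (A : Type) [Ring A] [Algebra k A] [FiniteDimensional k A]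
    (B : Type) [Ring B] [Algebra k B] [FiniteDimensional k B]
    (𝒳 : FGModuleCat A → Prop) (𝒴 : FGModuleCat B → Prop)
    (F : FGModuleCat A ⥤ FGModuleCat B) (G : FGModuleCat B ⥤ FGModuleCat A)
    [F.Additive]
    (hexact : ∀ S : ShortComplex (FGModuleCat A), S.ShortExact → (S.map F).ShortExact)
    (Φ : 𝟭 (FGModuleCat B) ≅ G ⋙ F)
    (hFX : ∀ X : FGModuleCat A, 𝒳 X → 𝒴 (F.obj X))
    (n : ℕ)
    (h : ∀ M : FGModuleCat A, ∃ m ≤ n, HasResolutionOfLength 𝒳 m M) :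
    ∀ N : FGModuleCat B, ∃ m ≤ n, HasResolutionOfLength 𝒴 m N := by
  have : IsNoetherianRing A := isNoetherian_of_tower k inferInstance
  have : IsNoetherianRing B := isNoetherian_of_tower k inferInstance
  have hF : ∀ S : ShortComplex (FGModuleCat A), S.Exact → (S.map F).Exact :=
    (F.exact_tfae.out 0 1).1 hexact
  have := F.preservesEpimorphisms_of_map_exact hF
  intro N
  obtain ⟨m, hmn, hres⟩ := h (G.obj N)
  exact ⟨m, hmn, (hres.map F hF hFX).of_iso (Φ.app N).symm⟩

/-- Let `𝒳 ⊆ mod A`, `𝒴 ⊆ mod B` be additively closed classes containing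
all projectives, and let `F : mod A ⥤ mod B` and `G : mod B ⥤ mod A` be `k`-linear functors
with `F` exact, `id ≅ F ∘ G`, `F(𝒳) ⊆ 𝒴` and `G(𝒴) ⊆ 𝒳`.  If every `A`-module has an
`𝒳`-resolution of length at most `n`, then every `B`-module has a `𝒴`-resolution of
length at most `n`. -/
theorem resolution_global_dimension_transfer
    (k : Type) [Field k] (A : Type) [Ring A] [Algebra k A] [FiniteDimensional k A]
    (B : Type) [Ring B] [Algebra k B] [FiniteDimensional k B]
    (𝒳 : FGModuleCat A → Prop) (𝒴 : FGModuleCat B → Prop)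
    (haddX : AdditivelyClosed 𝒳) (haddY : AdditivelyClosed 𝒴)
    (hprojX : ∀ J : FGModuleCat A, Projective J → 𝒳 J)
    (hprojY : ∀ J : FGModuleCat B, Projective J → 𝒴 J)
    (F : FGModuleCat A ⥤ FGModuleCat B) (G : FGModuleCat B ⥤ FGModuleCat A)
    [F.Additive] [F.Linear k] [G.Additive] [G.Linear k]
    (hexact : ∀ S : ShortComplex (FGModuleCat A), S.ShortExact → (S.map F).ShortExact)
    (Φ : 𝟭 (FGModuleCat B) ≅ G ⋙ F)
    (hFX : ∀ X : FGModuleCat A, 𝒳 X → 𝒴 (F.obj X))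
    (hGY : ∀ Y : FGModuleCat B, 𝒴 Y → 𝒳 (G.obj Y))
    (n : ℕ)
    (h : ∀ M : FGModuleCat A, ∃ m ≤ n, HasResolutionOfLength 𝒳 m M) :
    ∀ N : FGModuleCat B, ∃ m ≤ n, HasResolutionOfLength 𝒴 m N :=
  resolution_global_dimension_transfer_general k A B 𝒳 𝒴 F G hexact Φ hFX n h
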